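/- Suppose the matrices M_1,…,M_r satisfy conditions (H1a), (H1b) and (H1c). Then they satisfy condition (H1): for all u ∈ W_m and v ∈ W_n with t(u) = o(v), there exists a unique w ∈ W_{m+n} such that w|[0,m] = u and w|[m,m+n] = v. -/

import Mathlib

/-!
Write `x →ᵢ y` for `M i y x = 1`. By (H1a) and (H1b), every path `a →ᵢ c →ⱼ b` with `i ≠ j`
closes into a unique square `a →ⱼ d →ᵢ b`. Hence a word of shape `N + e_j` is determined by its
restriction to `[0, N]` and its corner: the points of the new layer are forced one by one,
downward from the corner. Conversely, any corner `c` with `w N →ⱼ c` extends a word `w` of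
shape `N`: filling the new layer downward by square completion is consistent, because the
completions through two different neighbours agree by (H1c) applied to the cube they span.
Adding the unit steps of `n` to `u` one at a time builds the product `uv`, and the same
uniqueness shows that it is unique and that its second factor is `v`.
-/

open Matrix

variable {r : ℕ} {A : Type*}

/-- The `j`-th standard basis vector of `ℤ^r`. -/
def evec (r : ℕ) (j : Fin r) : Fin r → ℤ := fun i => if i = j then 1 else 0

/-- `w` represents a word of shape `m` (only its values on `[0,m]` matter):
`m ≥ 0` and the transition matrices are respected on the box `[0,m]`. -/
def IsWord (M : Fin r → Matrix A A ℤ) (m : Fin r → ℤ) (w : (Fin r → ℤ) → A) : Prop :=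
  0 ≤ m ∧ ∀ (l : Fin r → ℤ) (j : Fin r), 0 ≤ l → l + evec r j ≤ m →
    M j (w (l + evec r j)) (w l) = 1

/-- Two representing functions agree on the box `[0,m]`; this is equality of
words of shape `m`. -/
def AgreeOn (m : Fin r → ℤ) (w w' : (Fin r → ℤ) → A) : Prop :=
  ∀ l : Fin r → ℤ, 0 ≤ l → l ≤ m → w l = w' l

/-- The restriction `w|[k,k+n]`, as a word based at `0`: `(restrictW k w) i = w (i + k)`. -/
def restrictW (k : Fin r → ℤ) (w : (Fin r → ℤ) → A) : (Fin r → ℤ) → A :=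
  fun i => w (i + k)

/-- `w` (a word of shape `m`) is `p`-periodic: the translate `τ_p w`, given by
`(τ_p w)(x) = w (x - p)`, agrees with `w` on `[0,m] ∩ [p,p+m]`. -/
def IsPeriodic (p m : Fin r → ℤ) (w : (Fin r → ℤ) → A) : Prop :=
  ∀ x : Fin r → ℤ, 0 ≤ x → x ≤ m → p ≤ x → x ≤ p + m → w (x - p) = w x

/-- Condition (H0): each `M j` is nonzero. -/
def H0 (M : Fin r → Matrix A A ℤ) : Prop := ∀ j, M j ≠ 0

/-- Condition (H1): unique products of words. -/
def H1 (M : Fin r → Matrix A A ℤ) : Prop :=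
  ∀ (m n : Fin r → ℤ) (u v : (Fin r → ℤ) → A),
    IsWord M m u → IsWord M n v → u m = v 0 →
      (∃ w, IsWord M (m + n) w ∧ AgreeOn m w u ∧ AgreeOn n (restrictW m w) v) ∧
      (∀ w w', IsWord M (m + n) w → AgreeOn m w u → AgreeOn n (restrictW m w) v →
        IsWord M (m + n) w' → AgreeOn m w' u → AgreeOn n (restrictW m w') v →
        AgreeOn (m + n) w w')

/-- Condition (H2): the directed graph on `A` with an edge `a → b` whenever
`M i b a = 1` for some `i` is irreducible. -/
def H2 (M : Fin r → Matrix A A ℤ) : Prop :=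
  ∀ a b : A, Relation.ReflTransGen (fun x y => ∃ i, M i y x = 1) a b

/-- Condition (H3): for each nonzero `p ∈ ℤ^r` there is a non-`p`-periodic word. -/
def H3 (M : Fin r → Matrix A A ℤ) : Prop :=
  ∀ p : Fin r → ℤ, p ≠ 0 → ∃ (m : Fin r → ℤ) (w : (Fin r → ℤ) → A),
    IsWord M m w ∧ ¬ IsPeriodic p m w

/-- Condition (H1a): the matrices commute. -/
def H1a [Fintype A] (M : Fin r → Matrix A A ℤ) : Prop :=
  ∀ i j, M i * M j = M j * M i

/-- Condition (H1b): for `i < j`, the entries of `M i * M j` lie in `{0,1}`. -/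
def H1b [Fintype A] (M : Fin r → Matrix A A ℤ) : Prop :=
  ∀ i j, i < j → ∀ a b : A, (M i * M j) b a = 0 ∨ (M i * M j) b a = 1

/-- Condition (H1c): for `i < j < k`, the entries of `M i * M j * M k` lie in `{0,1}`. -/
def H1c [Fintype A] (M : Fin r → Matrix A A ℤ) : Prop :=
  ∀ i j k, i < j → j < k → ∀ a b : A,
    (M i * M j * M k) b a = 0 ∨ (M i * M j * M k) b a = 1

/-- Condition (H3*). -/
def H3star (M : Fin r → Matrix A A ℤ) : Prop :=
  ∀ (j : Fin r) (m : Fin r → ℤ), m j = 0 → ∀ w : (Fin r → ℤ) → A, IsWord M m w →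
    ∃ u u', IsWord M (m + evec r j) u ∧ IsWord M (m + evec r j) u' ∧
      AgreeOn m u w ∧ AgreeOn m u' w ∧ u (evec r j) ≠ u' (evec r j)

/-- `x` represents the product word `uv` of `u ∈ W_m` and `v ∈ W_n`. -/
def IsProd (M : Fin r → Matrix A A ℤ) (m n : Fin r → ℤ)
    (u v x : (Fin r → ℤ) → A) : Prop :=
  IsWord M (m + n) x ∧ AgreeOn m x u ∧ AgreeOn n (restrictW m x) v


theorem entry_nonneg {M : Fin r → Matrix A A ℤ} (hM : ∀ j (a b : A), M j b a = 0 ∨ M j b a = 1)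
    (j : Fin r) (x y : A) : 0 ≤ M j x y := by
  rcases hM j y x with h | h <;> omega

section NonnegMatrix

variable [Fintype A] {P Q : Matrix A A ℤ} {a b d d' : A}

theorem Matrix.mul_apply_nonneg (hP : ∀ x y, 0 ≤ P x y) (hQ : ∀ x y, 0 ≤ Q x y) :
    0 ≤ (P * Q) b a :=
  Finset.sum_nonneg fun _ _ => mul_nonneg (hP _ _) (hQ _ _)

theorem Matrix.le_mul_apply (hP : ∀ x y, 0 ≤ P x y) (hQ : ∀ x y, 0 ≤ Q x y) (d : A) :
    P b d * Q d a ≤ (P * Q) b a :=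
  Finset.single_le_sum (f := fun x => P b x * Q x a) (fun _ _ => mul_nonneg (hP _ _) (hQ _ _))
    (Finset.mem_univ d)

theorem Matrix.eq_of_mul_apply_le_one (hP : ∀ x y, 0 ≤ P x y) (hQ : ∀ x y, 0 ≤ Q x y)
    (h : (P * Q) b a ≤ 1) (hd : 1 ≤ P b d * Q d a) (hd' : 1 ≤ P b d' * Q d' a) : d = d' := by
  classical
  by_contra hne
  have : P b d * Q d a + P b d' * Q d' a ≤ (P * Q) b a := by
    rw [← Finset.sum_pair (f := fun x => P b x * Q x a) hne]
    exact Finset.sum_le_sum_of_subset_of_nonneg (Finset.subset_univ _)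
      fun _ _ _ => mul_nonneg (hP _ _) (hQ _ _)
  omega

theorem Matrix.exists_mul_apply_pos (h : 0 < (P * Q) b a) : ∃ d, 0 < P b d * Q d a := by
  obtain ⟨d, -, hd⟩ := Finset.exists_lt_of_sum_lt (f := fun _ => (0 : ℤ)) (s := Finset.univ)
    (by simpa [Matrix.mul_apply] using h)
  exact ⟨d, hd⟩

end NonnegMatrix

section Squares

variable [Fintype A] {M : Fin r → Matrix A A ℤ} {i j k : Fin r}
  {a b c d d' e B : A}

theorem mul_apply_le_one_of_ne (h1a : H1a M) (h1b : H1b M) (hij : i ≠ j) (a b : A) :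
    (M i * M j) b a ≤ 1 := by
  rcases hij.lt_or_gt with h | h
  · rcases h1b i j h a b with h' | h' <;> omega
  · rw [h1a]
    rcases h1b j i h a b with h' | h' <;> omega

theorem mul_mul_apply_le_one_of_ne (h1a : H1a M) (h1c : H1c M) (hij : i ≠ j) (hik : i ≠ k)
    (hjk : j ≠ k) (a b : A) : (M i * M j * M k) b a ≤ 1 := by
  have sorted : ∀ {p q s}, p < q → q < s → (M p * M q * M s) b a ≤ 1 := fun hpq hqs =>
    (h1c _ _ _ hpq hqs a b).elim (fun h => h.trans_le zero_le_one) le_of_eq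
  have swap₁₂ : ∀ p q s, M p * M q * M s = M q * M p * M s := fun p q s => by rw [h1a]
  have swap₂₃ : ∀ p q s, M p * M q * M s = M p * M s * M q := fun p q s => by
    rw [mul_assoc, h1a q s, ← mul_assoc]
  rcases hij.lt_or_gt with h₁ | h₁ <;> rcases hik.lt_or_gt with h₂ | h₂ <;>
    rcases hjk.lt_or_gt with h₃ | h₃
  · exact sorted h₁ h₃
  · rw [swap₂₃]; exact sorted h₂ h₃
  · omega
  · rw [swap₂₃, swap₁₂]; exact sorted h₂ h₁
  · rw [swap₁₂]; exact sorted h₁ h₂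
  · omega
  · rw [swap₁₂, swap₂₃]; exact sorted h₃ h₂
  · rw [swap₁₂, swap₂₃, swap₁₂]; exact sorted h₃ h₁

theorem existsUnique_square (hM : ∀ j (a b : A), M j b a = 0 ∨ M j b a = 1) (h1a : H1a M)
    (h1b : H1b M) (hij : i ≠ j) (h₁ : M i c a = 1) (h₂ : M j b c = 1) :
    ∃! d, M j d a = 1 ∧ M i b d = 1 := by
  have hnn := entry_nonneg hM
  have hpos : 0 < (M i * M j) b a := by
    have := Matrix.le_mul_apply (hnn j) (hnn i) (b := b) (a := a) c
    rw [h₂, h₁, ← h1a] at this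
    omega
  obtain ⟨d, hd⟩ := Matrix.exists_mul_apply_pos hpos
  have hd₁ : M i b d = 1 ∧ M j d a = 1 := by
    rcases hM i d b with h | h <;> rcases hM j a d with h' | h' <;> simp_all
  refine ⟨d, ⟨hd₁.2, hd₁.1⟩, fun d' hd' => ?_⟩
  refine Matrix.eq_of_mul_apply_le_one (hnn i) (hnn j)
    (mul_apply_le_one_of_ne h1a h1b hij a b) ?_ ?_
  · rw [hd'.1, hd'.2]; rfl
  · rw [hd₁.1, hd₁.2]; rfl

/-- `d` and `d'` are intermediate points of two paths from `a` to `B` counted by the entry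
`(M k * M i * M j) B a ≤ 1`. -/
theorem eq_of_cube (hM : ∀ j (a b : A), M j b a = 0 ∨ M j b a = 1) (h1a : H1a M) (h1c : H1c M)
    (hki : k ≠ i) (hkj : k ≠ j) (hij : i ≠ j)
    (h₁ : M j d a = 1) (h₂ : M i b d = 1) (h₃ : M k B b = 1)
    (h₁' : M j d' a = 1) (h₂' : M k e d' = 1) (h₃' : M i B e = 1) : d = d' := by
  have hnn := entry_nonneg hM
  have hki_nn : ∀ x y, 0 ≤ (M k * M i) x y := fun _ _ => Matrix.mul_apply_nonneg (hnn k) (hnn i)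
  refine Matrix.eq_of_mul_apply_le_one hki_nn (hnn j)
    (mul_mul_apply_le_one_of_ne h1a h1c hki hkj hij a B) ?_ ?_
  · have := Matrix.le_mul_apply (hnn k) (hnn i) (b := B) (a := d) b
    rw [h₃, h₂] at this
    rw [h₁]; omega
  · have := Matrix.le_mul_apply (hnn i) (hnn k) (b := B) (a := d') e
    rw [h₃', h₂', ← h1a] at this
    rw [h₁']; omega

end Squares

section Lattice

@[simp] theorem evec_apply_self (j : Fin r) : evec r j j = 1 := if_pos rfl

@[simp] theorem evec_apply_of_ne {i j : Fin r} (h : i ≠ j) : evec r j i = 0 := if_neg h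

theorem evec_nonneg (j : Fin r) : 0 ≤ evec r j := fun i => by
  unfold evec; split_ifs <;> simp

theorem sum_add_evec (z : Fin r → ℤ) (i : Fin r) : ∑ t, (z + evec r i) t = ∑ t, z t + 1 := by
  simp [Finset.sum_add_distrib, evec]

theorem sum_lt_sum_of_le_of_lt {z N : Fin r → ℤ} {i : Fin r} (hz : z ≤ N) (hi : z i < N i) :
    ∑ t, z t < ∑ t, N t :=
  Finset.sum_lt_sum (fun t _ => hz t) ⟨i, Finset.mem_univ _, hi⟩

theorem eq_of_le_of_sum_le {z N : Fin r → ℤ} (hz : z ≤ N) (h : ∑ t, N t ≤ ∑ t, z t) : z = N :=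
  le_antisymm hz fun _ => not_lt.1 fun hi => (sum_lt_sum_of_le_of_lt hz hi).not_ge h

theorem exists_lt_of_le_of_ne {z N : Fin r → ℤ} (hz : z ≤ N) (hne : z ≠ N) : ∃ i, z i < N i := by
  by_contra! h
  exact hne (le_antisymm hz h)

theorem add_evec_le {z N : Fin r → ℤ} {i : Fin r} (hz : z ≤ N) (hi : z i < N i) :
    z + evec r i ≤ N := fun t => by
  rcases eq_or_ne t i with rfl | ht
  · simpa using hi
  · simpa [ht] using hz t

theorem le_of_le_add_evec {z N : Fin r → ℤ} {j : Fin r} (h : z ≤ N + evec r j)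
    (hj : z j ≤ N j) : z ≤ N := fun t => by
  rcases eq_or_ne t j with rfl | ht
  · exact hj
  · simpa [ht] using h t

theorem nonneg_induction {P : ∀ n : Fin r → ℤ, 0 ≤ n → Prop} (zero : P 0 le_rfl)
    (add_evec : ∀ n hn k, P n hn → P (n + evec r k) (add_nonneg hn (evec_nonneg k)))
    (n : Fin r → ℤ) (hn : 0 ≤ n) : P n hn := by
  by_cases h0 : n = 0
  · subst h0; exact zero
  obtain ⟨k, hk⟩ := exists_lt_of_le_of_ne hn (Ne.symm h0)
  have hn' : 0 ≤ n - evec r k := fun t => by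
    rcases eq_or_ne t k with rfl | ht
    · simp only [Pi.zero_apply, Pi.sub_apply, evec_apply_self] at hk ⊢; omega
    · simpa [ht] using hn t
  have := add_evec _ hn' k (nonneg_induction zero add_evec _ hn')
  simp only [sub_add_cancel] at this
  exact this
termination_by (∑ t, n t).toNat
decreasing_by
  have := sum_add_evec (n - evec r k) k
  rw [sub_add_cancel] at this
  have := sum_lt_sum_of_le_of_lt hn hk
  simp only [Pi.zero_apply, Finset.sum_const_zero] at this
  omega

theorem box_induction_down {N : Fin r → ℤ} {P : (Fin r → ℤ) → Prop}
    (step : ∀ z ≤ N, (∀ i, z i < N i → P (z + evec r i)) → P z) (z : Fin r → ℤ) (hz : z ≤ N) :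
    P z :=
  step z hz fun i hi => box_induction_down step (z + evec r i) (add_evec_le hz hi)
termination_by (∑ t, N t - ∑ t, z t).toNat
decreasing_by
  have := sum_add_evec z i
  have := sum_lt_sum_of_le_of_lt hz hi
  omega

end Lattice

section Words

variable {M : Fin r → Matrix A A ℤ} {m n N : Fin r → ℤ} {w w' : (Fin r → ℤ) → A}

theorem IsWord.mono {n' : Fin r → ℤ} (hw : IsWord M n w) (hn' : 0 ≤ n') (h : n' ≤ n) :
    IsWord M n' w :=
  ⟨hn', fun l j hl hle => hw.2 l j hl (hle.trans h)⟩

theorem IsWord.restrictW (hw : IsWord M (m + n) w) (hm : 0 ≤ m) (hn : 0 ≤ n) :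
    IsWord M n (restrictW m w) := by
  refine ⟨hn, fun l j hl hle => ?_⟩
  have := hw.2 (l + m) j (add_nonneg hl hm) (by
    rw [add_right_comm, add_comm m]; exact add_le_add hle le_rfl)
  rwa [add_right_comm] at this

theorem AgreeOn.mono {n' : Fin r → ℤ} (h : AgreeOn n w w') (h' : n' ≤ n) : AgreeOn n' w w' :=
  fun l hl hle => h l hl (hle.trans h')

variable [Fintype A] {j : Fin r}

theorem agreeOn_add_evec (hM : ∀ j (a b : A), M j b a = 0 ∨ M j b a = 1) (h1a : H1a M)
    (h1b : H1b M) (hN : 0 ≤ N) (hw : IsWord M (N + evec r j) w)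
    (hw' : IsWord M (N + evec r j) w') (hagree : AgreeOn N w w')
    (hc : w (N + evec r j) = w' (N + evec r j)) : AgreeOn (N + evec r j) w w' := by
  have top : ∀ z ≤ N, 0 ≤ z → z j = N j → w (z + evec r j) = w' (z + evec r j) := by
    refine box_induction_down fun z hzN ih hz0 hzj => ?_
    by_cases hz : z = N
    · rw [hz, hc]
    obtain ⟨i, hi⟩ := exists_lt_of_le_of_ne hzN hz
    have hij : i ≠ j := by rintro rfl; omega
    have hzi0 : 0 ≤ z + evec r i := add_nonneg hz0 (evec_nonneg i)
    have hzj0 : 0 ≤ z + evec r j := add_nonneg hz0 (evec_nonneg j)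
    have hleij : z + evec r i + evec r j ≤ N + evec r j :=
      add_le_add (add_evec_le hzN hi) le_rfl
    have hleji : z + evec r j + evec r i ≤ N + evec r j := by rwa [add_right_comm]
    have hlei : z + evec r i ≤ N + evec r j :=
      (le_add_of_nonneg_right (evec_nonneg j)).trans hleij
    have hlej : z + evec r j ≤ N + evec r j := add_le_add hzN le_rfl
    have hup := ih i hi hzi0 (by simp [hij.symm, hzj])
    have hside : ∀ {x : (Fin r → ℤ) → A}, IsWord M (N + evec r j) x →
        M i (x (z + evec r i + evec r j)) (x (z + evec r j)) = 1 := fun hx => by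
      rw [add_right_comm]; exact hx.2 _ i hzj0 hleji
    have hsq := existsUnique_square hM h1a h1b hij (hw.2 z i hz0 hlei) (hw.2 _ j hzi0 hleij)
    refine hsq.unique ⟨hw.2 z j hz0 hlej, hside hw⟩ ⟨?_, ?_⟩
    · rw [hagree z hz0 hzN]; exact hw'.2 z j hz0 hlej
    · rw [hup]; exact hside hw'
  intro x hx0 hxN
  by_cases hxj : x j ≤ N j
  · exact hagree x hx0 (le_of_le_add_evec hxN hxj)
  have hxj' : x j = N j + 1 := by
    have := hxN j
    simp only [Pi.add_apply, evec_apply_self] at this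
    omega
  have hsub : x - evec r j ≤ N := fun t => by
    rcases eq_or_ne t j with rfl | ht
    · simp [hxj']
    · simpa [ht] using hxN t
  have hsub0 : 0 ≤ x - evec r j := fun t => by
    rcases eq_or_ne t j with rfl | ht
    · simpa [hxj'] using hN t
    · simpa [ht] using hx0 t
  simpa using top _ hsub hsub0 (by simp [hxj'])

/-- `f z` stands for the value at `z + evec r j` of an extension of the word `w` of shape `N` to
shape `N + evec r j`: `IsLid` asks for the edges of that extension which meet the new layer, at
the points `z` of the top face `z j = N j` of `[0, N]` of height `∑ z ≥ h`. -/
def IsLid (M : Fin r → Matrix A A ℤ) (N : Fin r → ℤ) (j : Fin r) (w f : (Fin r → ℤ) → A)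
    (h : ℤ) : Prop :=
  ∀ z, 0 ≤ z → z ≤ N → z j = N j → h ≤ ∑ t, z t →
    M j (f z) (w z) = 1 ∧ ∀ i, z i < N i → M i (f (z + evec r i)) (f z) = 1

theorem exists_lid_point (hM : ∀ j (a b : A), M j b a = 0 ∨ M j b a = 1) (h1a : H1a M)
    (h1b : H1b M) (h1c : H1c M) {f : (Fin r → ℤ) → A} {z : Fin r → ℤ} {i₀ : Fin r}
    (hw : IsWord M N w) (hf : IsLid M N j w f (∑ t, z t + 1)) (hz0 : 0 ≤ z) (hzN : z ≤ N)
    (hzj : z j = N j) (hi₀ : z i₀ < N i₀) :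
    ∃ d, M j d (w z) = 1 ∧ ∀ i, z i < N i → M i (f (z + evec r i)) d = 1 := by
  have hne : ∀ {i}, z i < N i → i ≠ j := by rintro i hi rfl; omega
  have hup : ∀ {i}, z i < N i → M j (f (z + evec r i)) (w (z + evec r i)) = 1 ∧
      ∀ k, (z + evec r i) k < N k →
        M k (f (z + evec r i + evec r k)) (f (z + evec r i)) = 1 := fun hi =>
    hf _ (add_nonneg hz0 (evec_nonneg _)) (add_evec_le hzN hi)
      (by simp [(hne hi).symm, hzj]) (by rw [sum_add_evec])
  have hedge : ∀ {i}, z i < N i → M i (w (z + evec r i)) (w z) = 1 := fun hi =>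
    hw.2 z _ hz0 (add_evec_le hzN hi)
  obtain ⟨d, ⟨hd₁, hd₂⟩, -⟩ :=
    existsUnique_square hM h1a h1b (hne hi₀) (hedge hi₀) (hup hi₀).1
  refine ⟨d, hd₁, fun i hi => ?_⟩
  rcases eq_or_ne i i₀ with rfl | hii₀
  · exact hd₂
  obtain ⟨d', ⟨hd'₁, hd'₂⟩, -⟩ := existsUnique_square hM h1a h1b (hne hi) (hedge hi) (hup hi).1
  have hB : M i (f (z + evec r i₀ + evec r i)) (f (z + evec r i₀)) = 1 :=
    (hup hi₀).2 i (by simpa [hii₀] using hi)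
  have hB' : M i₀ (f (z + evec r i₀ + evec r i)) (f (z + evec r i)) = 1 := by
    rw [add_right_comm]; exact (hup hi).2 i₀ (by simpa [hii₀.symm] using hi₀)
  rwa [eq_of_cube hM h1a h1c hii₀ (hne hi) (hne hi₀) hd₁ hd₂ hB hd'₁ hd'₂ hB']

theorem exists_lid (hM : ∀ j (a b : A), M j b a = 0 ∨ M j b a = 1) (h1a : H1a M)
    (h1b : H1b M) (h1c : H1c M) {c : A} (hw : IsWord M N w) (hc : M j c (w N) = 1) :
    ∃ f, f N = c ∧ IsLid M N j w f 0 := by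
  suffices ∀ h ≤ ∑ t, N t, ∃ f, f N = c ∧ IsLid M N j w f h from
    this 0 (Finset.sum_nonneg fun t _ => hw.1 t)
  intro h hh
  induction h, hh using Int.leInductionDown with
  | base =>
    refine ⟨fun _ => c, rfl, fun z _ hzN _ hz => ?_⟩
    obtain rfl := eq_of_le_of_sum_le hzN hz
    exact ⟨hc, fun i hi => (lt_irrefl _ hi).elim⟩
  | pred h hh ih =>
    obtain ⟨f, hfN, hf⟩ := ih
    have hpoint : ∀ z, ∃ d, (0 ≤ z ∧ z ≤ N ∧ z j = N j ∧ ∑ t, z t + 1 = h) →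
        M j d (w z) = 1 ∧ ∀ i, z i < N i → M i (f (z + evec r i)) d = 1 := by
      intro z
      by_cases hz : 0 ≤ z ∧ z ≤ N ∧ z j = N j ∧ ∑ t, z t + 1 = h
      · obtain ⟨hz0, hzN, hzj, hzh⟩ := hz
        obtain ⟨i₀, hi₀⟩ := exists_lt_of_le_of_ne hzN (by rintro rfl; omega)
        obtain ⟨d, hd⟩ :=
          exists_lid_point hM h1a h1b h1c hw (hzh ▸ hf) hz0 hzN hzj hi₀
        exact ⟨d, fun _ => hd⟩
      · exact ⟨f z, fun h' => (hz h').elim⟩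
    choose g hg using hpoint
    refine ⟨fun z => if ∑ t, z t + 1 = h then g z else f z,
      by simp only [show ¬∑ t, N t + 1 = h by omega, if_false, hfN],
      fun z hz0 hzN hzj hzh => ?_⟩
    have hup : ∀ i, ¬ ∑ t, (z + evec r i) t + 1 = h := fun i => by rw [sum_add_evec]; omega
    simp only [hup, if_false]
    by_cases hzh' : ∑ t, z t + 1 = h
    · simpa only [hzh', if_true] using hg z ⟨hz0, hzN, hzj, hzh'⟩
    · simpa only [hzh', if_false] using hf z hz0 hzN hzj (by omega)

theorem exists_extend (hM : ∀ j (a b : A), M j b a = 0 ∨ M j b a = 1) (h1a : H1a M)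
    (h1b : H1b M) (h1c : H1c M) {c : A} (hw : IsWord M N w) (hc : M j c (w N) = 1) :
    ∃ w', IsWord M (N + evec r j) w' ∧ AgreeOn N w' w ∧ w' (N + evec r j) = c := by
  obtain ⟨f, hfN, hf⟩ := exists_lid hM h1a h1b h1c hw hc
  have hf' : ∀ z, 0 ≤ z → z ≤ N → z j = N j → _ := fun z hz0 hzN hzj =>
    hf z hz0 hzN hzj (Finset.sum_nonneg fun t _ => hz0 t)
  refine ⟨fun x => if x j = N j + 1 then f (x - evec r j) else w x,
    ⟨add_nonneg hw.1 (evec_nonneg j), fun l i hl0 hle => ?_⟩,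
    fun l _ hl => if_neg (show ¬l j = N j + 1 by have : l j ≤ N j := hl j; omega), by simp [hfN]⟩
  have hl : l ≤ N + evec r j := (le_add_of_nonneg_right (evec_nonneg i)).trans hle
  have hlj : l j ≤ N j + 1 := by simpa using hl j
  rcases eq_or_ne i j with rfl | hij
  · have hlN : l ≤ N := le_of_le_add_evec hl (by
      have := hle i
      simp only [Pi.add_apply, evec_apply_self] at this
      omega)
    by_cases hli : l i = N i
    · simpa [hli] using (hf' l hl0 hlN hli).1
    · have hli' : l i < N i := lt_of_le_of_ne (hlN i) hli
      have hne : ¬l i = N i + 1 := by omega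
      have hne' : ¬l i + 1 = N i + 1 := by omega
      simpa [hne, hne'] using hw.2 l i hl0 (add_evec_le hlN hli')
  · by_cases hlj' : l j = N j + 1
    · have hz0 : 0 ≤ l - evec r j := fun t => by
        rcases eq_or_ne t j with rfl | ht
        · simpa [hlj'] using hw.1 t
        · simpa [ht] using hl0 t
      have hzN : l - evec r j ≤ N := fun t => by
        rcases eq_or_ne t j with rfl | ht
        · simp [hlj']
        · simpa [ht] using hl t
      have hzi : (l - evec r j) i < N i := by simpa [hij] using hle i
      have := (hf' _ hz0 hzN (by simp [hlj'])).2 i hzi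
      rw [sub_add_eq_add_sub] at this
      simpa [hij.symm, hlj'] using this
    · have hle' : l + evec r i ≤ N := le_of_le_add_evec hle (by simp [hij.symm]; omega)
      simpa [hij.symm, hlj'] using hw.2 l i hl0 hle'

theorem agreeOn_add_of_agreeOn_restrictW (hM : ∀ j (a b : A), M j b a = 0 ∨ M j b a = 1)
    (h1a : H1a M) (h1b : H1b M) (hm : 0 ≤ m) (hn : 0 ≤ n) (hw : IsWord M (m + n) w)
    (hw' : IsWord M (m + n) w') (h₁ : AgreeOn m w w')
    (h₂ : AgreeOn n (restrictW m w) (restrictW m w')) : AgreeOn (m + n) w w' := by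
  induction n, hn using nonneg_induction generalizing w w' with
  | zero => rwa [add_zero]
  | add_evec n hn k ih =>
    have hmn : 0 ≤ m + n := add_nonneg hm hn
    have hnk : n ≤ n + evec r k := le_add_of_nonneg_right (evec_nonneg k)
    have hmnk : m + n ≤ m + n + evec r k := le_add_of_nonneg_right (evec_nonneg k)
    rw [← add_assoc] at hw hw' ⊢
    refine agreeOn_add_evec hM h1a h1b hmn hw hw' ?_ ?_
    · exact ih (hw.mono hmn hmnk) (hw'.mono hmn hmnk) h₁ (h₂.mono hnk)
    · have := h₂ _ (hn.trans hnk) le_rfl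
      rwa [restrictW, restrictW, add_comm _ m, ← add_assoc] at this

theorem exists_isProd (hM : ∀ j (a b : A), M j b a = 0 ∨ M j b a = 1) (h1a : H1a M)
    (h1b : H1b M) (h1c : H1c M) {u v : (Fin r → ℤ) → A} (hu : IsWord M m u)
    (hv : IsWord M n v) (huv : u m = v 0) : ∃ w, IsProd M m n u v w := by
  induction n, hv.1 using nonneg_induction generalizing v with
  | zero =>
    refine ⟨u, by rwa [add_zero], fun _ _ _ => rfl, fun l hl0 hl => ?_⟩
    obtain rfl := le_antisymm hl hl0
    simpa [restrictW] using huv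
  | add_evec n hn k ih =>
    have hnk : n ≤ n + evec r k := le_add_of_nonneg_right (evec_nonneg k)
    obtain ⟨w₁, hw₁, hw₁u, hw₁v⟩ := ih (hv.mono hn hnk) huv
    have hc : M k (v (n + evec r k)) (w₁ (m + n)) = 1 := by
      have := hw₁v n hn le_rfl
      rw [restrictW, add_comm] at this
      rw [this]; exact hv.2 n k hn le_rfl
    obtain ⟨w, hw, hww₁, hwc⟩ := exists_extend hM h1a h1b h1c hw₁ hc
    rw [add_assoc] at hw
    refine ⟨w, hw, fun l hl0 hl => ?_, ?_⟩
    · exact (hww₁ l hl0 (hl.trans (le_add_of_nonneg_right hn))).trans (hw₁u l hl0 hl)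
    refine agreeOn_add_evec hM h1a h1b hn (hw.restrictW hu.1 hv.1) hv (fun l hl0 hl => ?_) ?_
    · show w (l + m) = v l
      rw [hww₁ _ (add_nonneg hl0 hu.1) (by rw [add_comm m]; exact add_le_add hl le_rfl)]
      exact hw₁v l hl0 hl
    · show w (n + evec r k + m) = v (n + evec r k)
      rwa [add_comm, ← add_assoc]

end Words

theorem stmt_4_general [Fintype A]
    (M : Fin r → Matrix A A ℤ)
    (hM : ∀ j (a b : A), M j b a = 0 ∨ M j b a = 1)
    (h1a : H1a M) (h1b : H1b M) (h1c : H1c M) :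
    H1 M := by
  intro m n u v hu hv huv
  refine ⟨exists_isProd hM h1a h1b h1c hu hv huv, fun w w' hw hwu hwv hw' hw'u hw'v => ?_⟩
  exact agreeOn_add_of_agreeOn_restrictW hM h1a h1b hu.1 hv.1 hw hw'
    (fun l hl0 hl => (hwu l hl0 hl).trans (hw'u l hl0 hl).symm)
    (fun l hl0 hl => (hwv l hl0 hl).trans (hw'v l hl0 hl).symm)

/-- conditions (H1a), (H1b) and (H1c) imply condition (H1). -/
theorem stmt_4 [Fintype A] [Nonempty A] (hr : 0 < r)
    (M : Fin r → Matrix A A ℤ)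
    (hM : ∀ j (a b : A), M j b a = 0 ∨ M j b a = 1)
    (h1a : H1a M) (h1b : H1b M) (h1c : H1c M) :
    H1 M :=
  stmt_4_general M hM h1a h1b h1c
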